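/- Let X be a real Banach space with a spreading Schauder basis. Then for every ε ∈ (0,1) there exists a fixed-point-free (1+ε)-Lipschitz map T : B_X → B_X with d(T,B_X) = 0. -/

import Mathlib

open Metric Set Filter Topology

/-!
The right shift `U : x n ↦ x (n + 1)` is bounded because the basis is spreading, and comparing
coefficients shows that `U` has no eigenvector with positive eigenvalue and that `y - U y` is never
a nonzero multiple of `x 0`: otherwise `∑ x n` would converge, while spreading keeps `‖x n‖` away
from `0`. Hence, with `r` the radial retraction onto the ball and `w = x 0 / ‖x 0‖`, the map
`G y = r (U y + (1 - ‖y‖) • w)` is a Lipschitz, fixed-point-free self-map of the ball. Rescaled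
Cesàro sums of the partial sums `∑ i < k, x i`, or the normalised partial sums themselves, are
approximate fixed points of `G`, and the average `(1 - t) • id + t • G` with `t` small enough is
`(1 + ε)`-Lipschitz.
-/

theorem CauchySeq.of_dist_le_mul {α β : Type*} [PseudoMetricSpace α] [PseudoMetricSpace β]
    {f : ℕ → α} {g : ℕ → β} (hg : CauchySeq g) {C : ℝ}
    (hfg : ∀ m n, dist (f m) (f n) ≤ C * dist (g m) (g n)) : CauchySeq f := by
  rw [cauchySeq_iff_tendsto_dist_atTop_0] at hg ⊢
  refine squeeze_zero (fun _ => dist_nonneg) (fun p => hfg p.1 p.2) ?_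
  simpa using hg.const_mul C

theorem tendsto_zero_of_tendsto_sum_range {E : Type*} [NormedAddCommGroup E] {f : ℕ → E} {a : E}
    (h : Tendsto (fun N => ∑ i ∈ Finset.range N, f i) atTop (𝓝 a)) : Tendsto f atTop (𝓝 0) := by
  simpa [Finset.sum_range_succ] using ((tendsto_add_atTop_iff_nat 1).2 h).sub h

theorem Real.sInf_image_eq_zero {α : Type*} {f : α → ℝ} {C : Set α} (hf : ∀ a ∈ C, 0 ≤ f a)
    (happrox : ∀ δ > 0, ∃ a ∈ C, f a ≤ δ) : sInf (f '' C) = 0 := by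
  refine le_antisymm (le_of_forall_gt_imp_ge_of_dense fun δ hδ => ?_)
    (Real.sInf_nonneg (forall_mem_image.2 hf))
  obtain ⟨a, ha, hfa⟩ := happrox δ hδ
  exact (csInf_le ⟨0, forall_mem_image.2 hf⟩ (mem_image_of_mem f ha)).trans hfa

theorem bddAbove_range_of_forall_strictMono {u : ℕ → ℝ} (hu : ∀ n, 0 ≤ u n)
    (h : ∀ φ : ℕ → ℕ, StrictMono φ → ∃ B, ∀ k, u (φ k) ≤ B * u k) : BddAbove (range u) := by
  by_contra hbdd
  have hfreq : ∀ k, ∃ᶠ j in atTop, (k + 1) * u k < u j := fun k => by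
    by_contra hev
    have hbd : IsBoundedUnder (· ≤ ·) cofinite u := by
      rw [Nat.cofinite_eq_atTop]
      exact isBoundedUnder_of_eventually_le ((not_frequently.1 hev).mono fun _ => le_of_not_gt)
    exact hbdd hbd.bddAbove_range_of_cofinite
  obtain ⟨φ, hφ, hφu⟩ := extraction_forall_of_frequently hfreq
  obtain ⟨B, hB⟩ := h φ hφ
  obtain ⟨k, hk⟩ := exists_nat_gt B
  nlinarith [hφu k, hB k, hu k]

theorem not_tendsto_zero_of_forall_strictMono {u : ℕ → ℝ} (hu : ∀ n, 0 < u n)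
    (h : ∀ φ : ℕ → ℕ, StrictMono φ → ∃ A > 0, ∀ k, A * u k ≤ u (φ k)) :
    ¬Tendsto u atTop (𝓝 0) := fun hlim => by
  have hev : ∀ k, ∀ᶠ j in atTop, u j < u k / (k + 1) := fun k =>
    hlim.eventually (gt_mem_nhds (by have := hu k; positivity))
  obtain ⟨φ, hφ, hφu⟩ := extraction_forall_of_eventually hev
  obtain ⟨A, hA, hAu⟩ := h φ hφ
  obtain ⟨k, hk⟩ := exists_nat_gt A⁻¹
  have hAk : A * (k + 1) < 1 := by
    have := (hAu k).trans_lt (hφu k)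
    rw [lt_div_iff₀ (by positivity)] at this
    nlinarith [hu k]
  rw [inv_lt_iff_one_lt_mul₀ hA] at hk
  nlinarith

section NormedSpace

variable {X : Type*} [NormedAddCommGroup X] [NormedSpace ℝ X]

noncomputable def radialRetraction (z : X) : X := (max 1 ‖z‖)⁻¹ • z

theorem norm_radialRetraction (z : X) : ‖radialRetraction z‖ = min 1 ‖z‖ := by
  rw [radialRetraction, norm_smul, norm_inv, Real.norm_of_nonneg (le_max_of_le_left zero_le_one)]
  rcases le_total ‖z‖ 1 with h | h
  · simp [h]
  · rw [max_eq_right h, min_eq_left h, inv_mul_cancel₀ (by linarith)]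

theorem radialRetraction_of_norm_le_one {z : X} (hz : ‖z‖ ≤ 1) : radialRetraction z = z := by
  rw [radialRetraction, max_eq_left hz, inv_one, one_smul]

theorem max_one_norm_smul_radialRetraction (z : X) : max 1 ‖z‖ • radialRetraction z = z := by
  rw [radialRetraction, smul_smul, mul_inv_cancel₀ (lt_max_of_lt_left one_pos).ne', one_smul]

theorem norm_radialRetraction_sub_le_of_le {u v : X} (huv : max 1 ‖v‖ ≤ max 1 ‖u‖) :
    ‖radialRetraction u - radialRetraction v‖ ≤ 2 * ‖u - v‖ := by
  set mu := max 1 ‖u‖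
  set mv := max 1 ‖v‖
  have hmu : 1 ≤ mu := le_max_left _ _
  have hmv : 0 < mv := lt_max_of_lt_left one_pos
  have hdiff : mu - mv ≤ ‖u - v‖ :=
    calc mu - mv ≤ |‖u‖ - ‖v‖| := by
          simpa only [mu, mv, max_comm (1 : ℝ)] using
            (le_abs_self _).trans (abs_max_sub_max_le_abs ‖u‖ ‖v‖ (1 : ℝ))
      _ ≤ ‖u - v‖ := abs_norm_sub_norm_le u v
  have hfirst : ‖mu⁻¹ • (u - v)‖ ≤ ‖u - v‖ := by
    rw [norm_smul, Real.norm_of_nonneg (by positivity)]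
    exact mul_le_of_le_one_left (norm_nonneg _) (inv_le_one_of_one_le₀ hmu)
  have hsecond : ‖(mu⁻¹ - mv⁻¹) • v‖ ≤ ‖u - v‖ :=
    calc ‖(mu⁻¹ - mv⁻¹) • v‖ = (mv⁻¹ - mu⁻¹) * ‖v‖ := by
          rw [norm_smul, Real.norm_eq_abs, abs_sub_comm,
            abs_of_nonneg (sub_nonneg.2 (inv_anti₀ hmv huv))]
      _ ≤ (mv⁻¹ - mu⁻¹) * mv :=
          mul_le_mul_of_nonneg_left (le_max_right _ _) (sub_nonneg.2 (inv_anti₀ hmv huv))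
      _ = (mu - mv) / mu := by field_simp
      _ ≤ mu - mv := div_le_self (sub_nonneg.2 huv) hmu
      _ ≤ ‖u - v‖ := hdiff
  calc ‖radialRetraction u - radialRetraction v‖ = ‖mu⁻¹ • (u - v) + (mu⁻¹ - mv⁻¹) • v‖ := by
        congr 1
        simp only [radialRetraction, mu, mv, smul_sub, sub_smul]
        abel
    _ ≤ 2 * ‖u - v‖ := by linarith [norm_add_le (mu⁻¹ • (u - v)) ((mu⁻¹ - mv⁻¹) • v)]

theorem lipschitzWith_radialRetraction : LipschitzWith 2 (radialRetraction : X → X) := by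
  refine LipschitzWith.of_dist_le_mul fun u v => ?_
  simp only [dist_eq_norm, NNReal.coe_ofNat]
  rcases le_total (max 1 ‖v‖) (max 1 ‖u‖) with h | h
  · exact norm_radialRetraction_sub_le_of_le h
  · rw [norm_sub_rev, norm_sub_rev u]
    exact norm_radialRetraction_sub_le_of_le h

/-- The witness is the average `T = (1 - t) • id + t • G` with `t = ε / L`. -/
theorem Convex.exists_fixedPointFree_averaged {C : Set X} (hC : Convex ℝ C) {G : X → X}
    (hGC : MapsTo G C C) (hGfix : ∀ y ∈ C, G y ≠ y) {L : ℝ}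
    (hGlip : ∀ y ∈ C, ∀ z ∈ C, ‖G y - G z‖ ≤ L * ‖y - z‖)
    (hGapprox : ∀ δ > 0, ∃ y ∈ C, ‖y - G y‖ ≤ δ) {ε : ℝ} (hε : 0 < ε) (hεL : ε ≤ L) :
    ∃ T : X → X, MapsTo T C C ∧ (∀ y ∈ C, T y ≠ y) ∧
      (∀ y ∈ C, ∀ z ∈ C, ‖T y - T z‖ ≤ (1 + ε) * ‖y - z‖) ∧
      sInf ((fun y => ‖y - T y‖) '' C) = 0 := by
  set t := ε / L
  have ht : 0 < t := div_pos hε (hε.trans_le hεL)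
  have ht1 : t ≤ 1 := div_le_one_of_le₀ hεL (hε.le.trans hεL)
  have htL : t * L = ε := div_mul_cancel₀ ε (hε.trans_le hεL).ne'
  have hdisp : ∀ y, y - ((1 - t) • y + t • G y) = t • (y - G y) := fun y => by module
  refine ⟨fun y => (1 - t) • y + t • G y, fun y hy => hC hy (hGC hy) (by linarith) ht.le
    (by ring), fun y hy hTy => hGfix y hy ?_, fun y hy z hz => ?_, ?_⟩
  · have h := hdisp y
    rw [show (1 - t) • y + t • G y = y from hTy, sub_self, eq_comm, smul_eq_zero, sub_eq_zero] at h
    exact (h.resolve_left ht.ne').symm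
  · calc ‖(1 - t) • y + t • G y - ((1 - t) • z + t • G z)‖
        = ‖(1 - t) • (y - z) + t • (G y - G z)‖ := by congr 1; module
      _ ≤ (1 - t) * ‖y - z‖ + t * (L * ‖y - z‖) := by
          refine (norm_add_le _ _).trans (add_le_add ?_ ?_) <;>
            rw [norm_smul, Real.norm_of_nonneg (by linarith)]
          exact mul_le_mul_of_nonneg_left (hGlip y hy z hz) ht.le
      _ ≤ (1 + ε) * ‖y - z‖ := by nlinarith [norm_nonneg (y - z)]
  · refine Real.sInf_image_eq_zero (fun _ _ => norm_nonneg _) fun δ hδ => ?_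
    obtain ⟨y, hy, hyG⟩ := hGapprox δ hδ
    refine ⟨y, hy, ?_⟩
    rw [hdisp, norm_smul, Real.norm_of_nonneg ht.le]
    nlinarith [norm_nonneg (y - G y)]

noncomputable def driftMap (U : X →L[ℝ] X) (w y : X) : X :=
  radialRetraction (U y + (1 - ‖y‖) • w)

theorem norm_driftMap_le_one (U : X →L[ℝ] X) (w y : X) : ‖driftMap U w y‖ ≤ 1 := by
  rw [driftMap, norm_radialRetraction]
  exact min_le_left _ _

theorem lipschitzWith_driftMap (U : X →L[ℝ] X) {w : X} (hw : ‖w‖ = 1) :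
    LipschitzWith (2 * (‖U‖₊ + 1)) (driftMap U w) := by
  have hdrift : LipschitzWith 1 fun y : X => (1 - ‖y‖) • w := by
    refine LipschitzWith.of_dist_le_mul fun y z => ?_
    rw [dist_eq_norm, dist_eq_norm, ← sub_smul, norm_smul, hw, mul_one, NNReal.coe_one, one_mul,
      sub_sub_sub_cancel_left, Real.norm_eq_abs]
    exact abs_norm_sub_norm_le z y |>.trans_eq (norm_sub_rev z y)
  exact lipschitzWith_radialRetraction.comp (U.lipschitz.add hdrift)

/-- A fixed point `y` of the drift map gives `U y = c • y` with `c ≥ 1` if `‖y‖ = 1`, and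
`y - U y = (1 - ‖y‖) • w` if `‖y‖ < 1`. -/
theorem driftMap_ne_self (U : X →L[ℝ] X) {w y : X}
    (heig : ∀ c ≥ (1 : ℝ), ∀ y, U y = c • y → y = 0) (hray : ∀ s > (0 : ℝ), ∀ y, y - U y ≠ s • w)
    (hy : ‖y‖ ≤ 1) : driftMap U w y ≠ y := by
  intro hfix
  set z := U y + (1 - ‖y‖) • w
  rcases hy.eq_or_lt with hy1 | hy1
  · have hzy : max 1 ‖z‖ • y = z := by
      conv_lhs => rw [← hfix]
      exact max_one_norm_smul_radialRetraction z
    have hUy : U y = max 1 ‖z‖ • y := by rw [hzy]; simp [z, hy1]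
    simp [heig _ (le_max_left _ _) y hUy] at hy1
  · have hz : ‖z‖ ≤ 1 := by
      by_contra! hz
      rw [← hfix, driftMap, norm_radialRetraction, min_eq_left hz.le] at hy1
      exact hy1.false
    rw [driftMap, radialRetraction_of_norm_le_one hz] at hfix
    exact hray _ (sub_pos.2 hy1) y (sub_eq_iff_eq_add'.2 hfix.symm)

theorem norm_driftMap_sub_le (U : X →L[ℝ] X) (w : X) {y : X} (hy : ‖y‖ ≤ 1) :
    ‖driftMap U w y - y‖ ≤ 2 * ‖U y + (1 - ‖y‖) • w - y‖ := by
  have h := lipschitzWith_radialRetraction.dist_le_mul (U y + (1 - ‖y‖) • w) y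
  rwa [dist_eq_norm, dist_eq_norm, radialRetraction_of_norm_le_one hy] at h

theorem exists_norm_drift_eq (U : X →L[ℝ] X) (w v : X) {r : ℝ} (hr : 0 ≤ r)
    (hvr : 0 < ‖v‖ + r) :
    ∃ y : X, ‖y‖ ≤ 1 ∧ ‖U y + (1 - ‖y‖) • w - y‖ = ‖U v - v + r • w‖ / (‖v‖ + r) := by
  refine ⟨(‖v‖ + r)⁻¹ • v, ?_, ?_⟩
  · rw [norm_smul, norm_inv, Real.norm_of_nonneg hvr.le, inv_mul_le_one₀ hvr]
    linarith
  · have hcoef : 1 - ‖(‖v‖ + r)⁻¹ • v‖ = (‖v‖ + r)⁻¹ * r := by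
      rw [norm_smul, norm_inv, Real.norm_of_nonneg hvr.le]
      field_simp
      ring
    rw [hcoef, map_smul, mul_smul, ← smul_add, ← smul_sub, norm_smul, norm_inv,
      Real.norm_of_nonneg hvr.le, add_sub_right_comm, inv_mul_eq_div]

/-- For `v = ∑ k < N, S k` one has `U v - v + (N * a) • w = S N`, so the rescaled `v` is an
approximate fixed point unless `‖S N‖` is large compared with `N`; in that case the normalised `S N`
is one, since `‖U (S N) - S N‖ ≤ M`. -/
theorem exists_norm_drift_le (U : X →L[ℝ] X) {w : X} {a M δ : ℝ} (ha : 0 < a) (hδ : 0 < δ)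
    {S : ℕ → X} (hS0 : S 0 = 0) (hUS : ∀ k, U (S k) = S (k + 1) - a • w)
    (hM : ∀ k, ‖U (S k) - S k‖ ≤ M) :
    ∃ y : X, ‖y‖ ≤ 1 ∧ ‖U y + (1 - ‖y‖) • w - y‖ ≤ δ := by
  obtain ⟨N, hN⟩ := exists_nat_gt (M / (a * δ ^ 2))
  have hMN : M < δ * (δ * (N * a)) := by
    rw [div_lt_iff₀ (by positivity)] at hN
    linarith
  have hNa : 0 < N * a := by
    have := (norm_nonneg _).trans (hM 0)
    nlinarith
  rcases le_or_gt ‖S N‖ (δ * (N * a)) with hSN | hSN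
  · set v := ∑ k ∈ Finset.range N, S k
    have hstep : ∀ k, U (S k) - S k = (S (k + 1) - S k) - a • w := fun k => by
      rw [hUS]; abel
    have hv : U v - v + (N * a) • w = S N := by
      rw [map_sum, ← Finset.sum_sub_distrib, Finset.sum_congr rfl fun k _ => hstep k,
        Finset.sum_sub_distrib, Finset.sum_range_sub, hS0, Finset.sum_const, Finset.card_range,
        mul_smul, Nat.cast_smul_eq_nsmul]
      abel
    obtain ⟨y, hy, hyv⟩ := exists_norm_drift_eq U w v hNa.le (by positivity)
    refine ⟨y, hy, ?_⟩
    rw [hyv, hv, div_le_iff₀ (by positivity)]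
    nlinarith [norm_nonneg v]
  · have hSpos : 0 < ‖S N‖ := (mul_pos hδ hNa).trans hSN
    obtain ⟨y, hy, hyv⟩ := exists_norm_drift_eq U w (S N) le_rfl (by simpa using hSpos)
    refine ⟨y, hy, ?_⟩
    rw [hyv, zero_smul, add_zero, add_zero, div_le_iff₀ hSpos]
    nlinarith [hM N]

end NormedSpace

section SchauderBasis

variable {X : Type*} [NormedAddCommGroup X] [NormedSpace ℝ X]

/-- Unlike Mathlib's `SchauderBasis`, no continuity of the coordinate functionals is assumed. -/
def IsSchauderBasis (x : ℕ → X) : Prop :=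
  ∀ y : X, ∃! a : ℕ → ℝ, Tendsto (fun N => ∑ i ∈ Finset.range N, a i • x i) atTop (𝓝 y)

namespace IsSchauderBasis

variable {x : ℕ → X} (hx : IsSchauderBasis x)

noncomputable def coeff : X →ₗ[ℝ] ℕ → ℝ where
  toFun y := (hx y).exists.choose
  map_add' y z := (hx (y + z)).unique (hx (y + z)).exists.choose_spec <| by
    simpa only [Pi.add_apply, add_smul, Finset.sum_add_distrib] using
      (hx y).exists.choose_spec.add (hx z).exists.choose_spec
  map_smul' c y := (hx (c • y)).unique (hx (c • y)).exists.choose_spec <| by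
    simpa only [Pi.smul_apply, smul_eq_mul, mul_smul, ← Finset.smul_sum, RingHom.id_apply] using
      (hx y).exists.choose_spec.const_smul c

theorem tendsto_coeff (y : X) :
    Tendsto (fun N => ∑ i ∈ Finset.range N, hx.coeff y i • x i) atTop (𝓝 y) :=
  (hx y).exists.choose_spec

theorem coeff_eq_of_tendsto {y : X} {a : ℕ → ℝ}
    (h : Tendsto (fun N => ∑ i ∈ Finset.range N, a i • x i) atTop (𝓝 y)) : hx.coeff y = a :=
  (hx y).unique (hx.tendsto_coeff y) h

theorem coeff_injective : Function.Injective hx.coeff := fun y z h =>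
  tendsto_nhds_unique (hx.tendsto_coeff y) (h ▸ hx.tendsto_coeff z)

theorem coeff_basis (k : ℕ) : hx.coeff (x k) = Pi.single k 1 := by
  refine hx.coeff_eq_of_tendsto (tendsto_const_nhds.congr' ?_)
  filter_upwards [eventually_gt_atTop k] with N hN
  simp [Pi.single_apply, hN]

protected theorem ne_zero (hx : IsSchauderBasis x) (k : ℕ) : x k ≠ 0 := fun h => by
  simpa [h] using congrFun (hx.coeff_basis k) k

section Shift

variable {B : ℝ}

theorem cauchySeq_sum_coeff_smul_succ
    (hB : ∀ (s : Finset ℕ) (a : ℕ → ℝ), ‖∑ n ∈ s, a n • x (n + 1)‖ ≤ B * ‖∑ n ∈ s, a n • x n‖)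
    (y : X) :
    CauchySeq fun N => ∑ i ∈ Finset.range N, hx.coeff y i • x (i + 1) := by
  have hIco : ∀ m n, m ≤ n → dist (∑ i ∈ Finset.range n, hx.coeff y i • x (i + 1))
      (∑ i ∈ Finset.range m, hx.coeff y i • x (i + 1)) ≤
        B * dist (∑ i ∈ Finset.range n, hx.coeff y i • x i)
          (∑ i ∈ Finset.range m, hx.coeff y i • x i) := fun m n hmn => by
    simpa only [dist_eq_norm, ← Finset.sum_Ico_eq_sub _ hmn] using hB (Finset.Ico m n) (hx.coeff y)
  refine (hx.tendsto_coeff y).cauchySeq.of_dist_le_mul (C := B) fun m n => ?_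
  rcases le_total m n with h | h
  · rw [dist_comm, dist_comm (∑ i ∈ _, _ • x i)]
    exact hIco m n h
  · exact hIco n m h

variable [CompleteSpace X]
  (hB : ∀ (s : Finset ℕ) (a : ℕ → ℝ), ‖∑ n ∈ s, a n • x (n + 1)‖ ≤ B * ‖∑ n ∈ s, a n • x n‖)

noncomputable def shift : X →L[ℝ] X :=
  LinearMap.mkContinuous
    { toFun := fun y => limUnder atTop fun N => ∑ i ∈ Finset.range N, hx.coeff y i • x (i + 1)
      map_add' := fun y z =>
        tendsto_nhds_unique (hx.cauchySeq_sum_coeff_smul_succ hB _).tendsto_limUnder <| by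
          simpa only [map_add, Pi.add_apply, add_smul, Finset.sum_add_distrib] using
            (hx.cauchySeq_sum_coeff_smul_succ hB y).tendsto_limUnder.add
              (hx.cauchySeq_sum_coeff_smul_succ hB z).tendsto_limUnder
      map_smul' := fun c y =>
        tendsto_nhds_unique (hx.cauchySeq_sum_coeff_smul_succ hB _).tendsto_limUnder <| by
          simpa only [map_smul, Pi.smul_apply, smul_eq_mul, mul_smul, ← Finset.smul_sum,
            RingHom.id_apply] using
            (hx.cauchySeq_sum_coeff_smul_succ hB y).tendsto_limUnder.const_smul c }
    B fun y =>
      le_of_tendsto_of_tendsto' (hx.cauchySeq_sum_coeff_smul_succ hB y).tendsto_limUnder.norm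
        ((hx.tendsto_coeff y).norm.const_mul B) fun _ => hB _ _

theorem tendsto_shift (y : X) :
    Tendsto (fun N => ∑ i ∈ Finset.range N, hx.coeff y i • x (i + 1)) atTop (𝓝 (hx.shift hB y)) :=
  (hx.cauchySeq_sum_coeff_smul_succ hB y).tendsto_limUnder

theorem coeff_shift (y : X) :
    hx.coeff (hx.shift hB y) = fun n => if n = 0 then 0 else hx.coeff y (n - 1) := by
  refine hx.coeff_eq_of_tendsto ((tendsto_add_atTop_iff_nat 1).1 ?_)
  simpa [Finset.sum_range_succ'] using hx.tendsto_shift hB y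

theorem shift_basis (k : ℕ) : hx.shift hB (x k) = x (k + 1) := by
  refine hx.coeff_injective (funext fun n => ?_)
  rcases n with _ | n <;> simp [coeff_shift, coeff_basis, Pi.single_apply]

theorem eq_zero_of_shift_eq_smul {c : ℝ} (hc : c ≠ 0) {y : X} (h : hx.shift hB y = c • y) :
    y = 0 := by
  have hn := fun n => congrFun (congrArg hx.coeff h) n
  have hcoeff : ∀ n, hx.coeff y n = 0 := by
    intro n
    induction n with
    | zero => simpa [coeff_shift, hc] using hn 0
    | succ n ih => simpa [coeff_shift, ih, hc] using hn (n + 1)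
  exact hx.coeff_injective (by ext n; simp [hcoeff])

theorem tendsto_sum_of_sub_shift_eq_smul {s : ℝ} (hs : s ≠ 0) {y : X}
    (h : y - hx.shift hB y = s • x 0) :
    Tendsto (fun N => ∑ i ∈ Finset.range N, x i) atTop (𝓝 (s⁻¹ • y)) := by
  have hn := fun n => congrFun (congrArg hx.coeff h) n
  have hcoeff : ∀ n, hx.coeff y n = s := by
    intro n
    induction n with
    | zero => simpa [coeff_shift, coeff_basis] using hn 0
    | succ n ih => simpa [coeff_shift, coeff_basis, ih, sub_eq_zero] using hn (n + 1)
  simpa [hcoeff, ← Finset.smul_sum, smul_smul, hs] using (hx.tendsto_coeff y).const_smul s⁻¹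

theorem driftMap_shift_ne_self (hx0 : ¬Tendsto x atTop (𝓝 0)) {y : X} (hy : ‖y‖ ≤ 1) :
    driftMap (hx.shift hB) (‖x 0‖⁻¹ • x 0) y ≠ y := by
  refine driftMap_ne_self _ (fun c hc y h => hx.eq_zero_of_shift_eq_smul hB (by positivity) h)
    (fun s hs y h => hx0 ?_) hy
  rw [smul_smul] at h
  exact tendsto_zero_of_tendsto_sum_range (hx.tendsto_sum_of_sub_shift_eq_smul hB
    (mul_ne_zero hs.ne' (inv_ne_zero (norm_ne_zero_iff.2 (hx.ne_zero 0)))) h)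

theorem exists_norm_driftMap_shift_sub_le {M : ℝ} (hM : ∀ n, ‖x n‖ ≤ M) {δ : ℝ} (hδ : 0 < δ) :
    ∃ y : X, ‖y‖ ≤ 1 ∧ ‖driftMap (hx.shift hB) (‖x 0‖⁻¹ • x 0) y - y‖ ≤ δ := by
  have hx0 : x 0 ≠ 0 := hx.ne_zero 0
  have hUS : ∀ k, hx.shift hB (∑ i ∈ Finset.range k, x i) =
      ∑ i ∈ Finset.range (k + 1), x i - ‖x 0‖ • ‖x 0‖⁻¹ • x 0 := fun k => by
    rw [smul_inv_smul₀ (norm_ne_zero_iff.2 hx0), map_sum, Finset.sum_range_succ']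
    simp [shift_basis]
  have hUS_sub : ∀ k, ‖hx.shift hB (∑ i ∈ Finset.range k, x i) - ∑ i ∈ Finset.range k, x i‖ ≤
      M + ‖x 0‖ := fun k => by
    rw [hUS, smul_inv_smul₀ (norm_ne_zero_iff.2 hx0), Finset.sum_range_succ, add_sub_assoc,
      add_sub_cancel_left]
    exact (norm_sub_le _ _).trans (by linarith [hM k])
  obtain ⟨y, hy, hyδ⟩ := exists_norm_drift_le (hx.shift hB) (norm_pos_iff.2 hx0) (half_pos hδ)
    (by simp) hUS hUS_sub
  exact ⟨y, hy, (norm_driftMap_sub_le _ _ hy).trans (by linarith)⟩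

end Shift

end IsSchauderBasis


def IsSpreading (x : ℕ → X) : Prop :=
  ∀ φ : ℕ → ℕ, StrictMono φ → ∃ A B : ℝ, 0 < A ∧ 0 < B ∧
    ∀ (s : Finset ℕ) (a : ℕ → ℝ),
      A * ‖∑ n ∈ s, a n • x n‖ ≤ ‖∑ n ∈ s, a n • x (φ n)‖ ∧
      ‖∑ n ∈ s, a n • x (φ n)‖ ≤ B * ‖∑ n ∈ s, a n • x n‖

namespace IsSpreading

variable {x : ℕ → X}

theorem exists_shift_bound (hx : IsSpreading x) : ∃ B : ℝ, ∀ (s : Finset ℕ) (a : ℕ → ℝ),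
    ‖∑ n ∈ s, a n • x (n + 1)‖ ≤ B * ‖∑ n ∈ s, a n • x n‖ := by
  obtain ⟨_, B, -, -, hB⟩ := hx (· + 1) fun _ _ h => Nat.succ_lt_succ h
  exact ⟨B, fun s a => (hB s a).2⟩

theorem bddAbove_range_norm (hx : IsSpreading x) : BddAbove (range fun n => ‖x n‖) :=
  bddAbove_range_of_forall_strictMono (fun n => norm_nonneg (x n)) fun φ hφ => by
    obtain ⟨_, B, -, -, hB⟩ := hx φ hφ
    exact ⟨B, fun k => by simpa using (hB {k} 1).2⟩

theorem not_tendsto_zero (hx : IsSpreading x) (hne : ∀ n, x n ≠ 0) : ¬Tendsto x atTop (𝓝 0) := by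
  rw [tendsto_zero_iff_norm_tendsto_zero]
  refine not_tendsto_zero_of_forall_strictMono (fun n => norm_pos_iff.2 (hne n)) fun φ hφ => ?_
  obtain ⟨A, _, hA, -, hAB⟩ := hx φ hφ
  exact ⟨A, hA, fun k => by simpa using (hAB {k} 1).1⟩

end IsSpreading

end SchauderBasis

/-- Let `X` be a real Banach space with a spreading Schauder basis.  Then
for every `ε ∈ (0,1)` there exists a fixed-point-free `(1+ε)`-Lipschitz map
`T : B_X → B_X` with `d(T, B_X) = 0`. -/
theorem statement13 {X : Type*} [NormedAddCommGroup X] [NormedSpace ℝ X] [CompleteSpace X]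
    (x : ℕ → X)
    (hbasis : ∀ y : X, ∃! a : ℕ → ℝ,
      Filter.Tendsto (fun N : ℕ => ∑ i ∈ Finset.range N, a i • x i)
        Filter.atTop (nhds y))
    (hspread : ∀ φ : ℕ → ℕ, StrictMono φ → ∃ A B : ℝ, 0 < A ∧ 0 < B ∧
      ∀ (s : Finset ℕ) (a : ℕ → ℝ),
        A * ‖∑ n ∈ s, a n • x n‖ ≤ ‖∑ n ∈ s, a n • x (φ n)‖ ∧
        ‖∑ n ∈ s, a n • x (φ n)‖ ≤ B * ‖∑ n ∈ s, a n • x n‖)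
    (ε : ℝ) (hε : ε ∈ Set.Ioo (0 : ℝ) 1) :
    ∃ T : X → X,
      Set.MapsTo T (Metric.closedBall (0 : X) 1) (Metric.closedBall (0 : X) 1) ∧
      (∀ y ∈ Metric.closedBall (0 : X) 1, T y ≠ y) ∧
      (∀ y ∈ Metric.closedBall (0 : X) 1, ∀ z ∈ Metric.closedBall (0 : X) 1,
        ‖T y - T z‖ ≤ (1 + ε) * ‖y - z‖) ∧
      sInf ((fun y => ‖y - T y‖) '' Metric.closedBall (0 : X) 1) = 0 := by
  have hx : IsSchauderBasis x := hbasis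
  have hsp : IsSpreading x := hspread
  obtain ⟨B, hB⟩ := hsp.exists_shift_bound
  obtain ⟨M, hM⟩ := hsp.bddAbove_range_norm
  set U := hx.shift hB
  set w := ‖x 0‖⁻¹ • x 0
  have hw : ‖w‖ = 1 := norm_smul_inv_norm (hx.ne_zero 0)
  refine (convex_closedBall (0 : X) 1).exists_fixedPointFree_averaged (G := driftMap U w)
    (L := 2 * (‖U‖ + 1)) (fun y _ => mem_closedBall_zero_iff.2 (norm_driftMap_le_one U w y))
    (fun y hy => hx.driftMap_shift_ne_self hB (hsp.not_tendsto_zero hx.ne_zero)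
      (mem_closedBall_zero_iff.1 hy))
    (fun y _ z _ => by simpa using (lipschitzWith_driftMap U hw).norm_sub_le y z)
    (fun δ hδ => ?_) hε.1 (by linarith [hε.2, norm_nonneg U])
  obtain ⟨y, hy, hyδ⟩ := hx.exists_norm_driftMap_shift_sub_le hB (fun n => hM ⟨n, rfl⟩) hδ
  exact ⟨y, mem_closedBall_zero_iff.2 hy, by rwa [norm_sub_rev]⟩
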